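/- (Linear growth bound on the vanishing perturbation.) Let v_ref, ω_ref, a_l, a_r : [0, ∞) → ℝ satisfy 1 ≤ a_l(t) ≤ 𝒜, 1 ≤ a_r(t) ≤ 𝒜, |v_ref(t)| ≤ M and |ω_ref(t)| ≤ M for all t, and let σ : [0, ∞) → ℝ. Let g(t, e_a) be the vanishing perturbation defined in the context. Then for every d > 0 there exists b̄ > 0 (independent of t) such that for all t ≥ 0 and all e_a ∈ ℝ⁵ with ‖e_a‖ ≤ d, one has ‖g(t, e_a)‖ ≤ |σ(t)|·b̄·‖e_a‖; in particular g(t, 0) = 0 for all t. -/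
import Mathlib
set_option maxHeartbeats 1000000

lemma abs_coord_le_norm (e : EuclideanSpace ℝ (Fin 5)) (i : Fin 5) : |e i| ≤ ‖e‖ := by
  rw [EuclideanSpace.norm_eq]
  calc |e i| = Real.sqrt (‖e i‖ ^ 2) := by
        rw [Real.norm_eq_abs, Real.sqrt_sq_eq_abs, abs_abs]
    _ ≤ _ := Real.sqrt_le_sqrt (Finset.single_le_sum
        (fun j _ => sq_nonneg ‖e j‖) (Finset.mem_univ i))

lemma norm_single5 (x : ℝ) :
    ‖((WithLp.equiv 2 (Fin 5 → ℝ)).symm ![0, x, 0, 0, 0] : EuclideanSpace ℝ (Fin 5))‖ = |x| := by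
  rw [EuclideanSpace.norm_eq]
  simp [Fin.sum_univ_five, Real.sqrt_sq_eq_abs]



/-- The vanishing lateral-slip perturbation `g(t, e_a)`. -/
noncomputable def gP (b k1 k2 k3 : ℝ) (vref ωref al ar σ : ℝ → ℝ) (t : ℝ)
    (e : EuclideanSpace ℝ (Fin 5)) : EuclideanSpace ℝ (Fin 5) :=
  let e1 := e 0
  let e2 := e 1
  let e3 := e 2
  let tl := e 3
  let tr := e 4
  let ωc := ωref t + (vref t / 2) * (k2 * (e2 + k3 * e3) + (1 / k3) * Real.sin e3)
  let vc := vref t * Real.cos e3 - k3 * e3 * ωc + k1 * e1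
  let Ω1 := vc + (b / 2) * ωc
  let Ω2 := vc - (b / 2) * ωc
  (WithLp.equiv 2 (Fin 5 → ℝ)).symm
    ![0,
      σ t * ((1 / 2) * (tl / al t) * Ω2 + (1 / 2) * (tr / ar t) * Ω1 - k3 * e3 * ωc + k1 * e1),
      0, 0, 0]

/-- linear growth bound on the vanishing lateral-slip perturbation `g`. -/
theorem stmt14 (b k1 k2 k3 γ1 γ2 A M : ℝ)
    (hb : 0 < b) (hk1 : 0 < k1) (hk2 : 0 < k2) (hk3 : 0 < k3)
    (hγ1 : 0 < γ1) (hγ2 : 0 < γ2) (hA : 1 ≤ A) (hM : 0 < M)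
    (vref ωref al ar σ : ℝ → ℝ)
    (hal : ∀ t, 0 ≤ t → 1 ≤ al t ∧ al t ≤ A)
    (har : ∀ t, 0 ≤ t → 1 ≤ ar t ∧ ar t ≤ A)
    (hv : ∀ t, 0 ≤ t → |vref t| ≤ M)
    (hw : ∀ t, 0 ≤ t → |ωref t| ≤ M) :
    ∀ d > 0, ∃ bbar > 0,
      (∀ t, 0 ≤ t → ∀ e : EuclideanSpace ℝ (Fin 5), ‖e‖ ≤ d →
        ‖gP b k1 k2 k3 vref ωref al ar σ t e‖ ≤ |σ t| * bbar * ‖e‖)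
      ∧ ∀ t, gP b k1 k2 k3 vref ωref al ar σ t 0 = 0 := by
  intro d hd
  set Cω : ℝ := M + M / 2 * (k2 * (1 + k3) * d + d / k3) with hCωdef
  set Cv : ℝ := M + k3 * d * Cω + k1 * d with hCvdef
  set CΩ : ℝ := Cv + b / 2 * Cω with hCΩdef
  have hCω0 : 0 < Cω := by rw [hCωdef]; positivity
  have hCv0 : 0 < Cv := by rw [hCvdef]; positivity
  have hCΩ0 : 0 < CΩ := by rw [hCΩdef]; positivity
  refine ⟨CΩ + k3 * Cω + k1 + 1, by nlinarith [mul_pos hk3 hCω0], ?_, ?_⟩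
  · intro t ht e he
    obtain ⟨hal1, -⟩ := hal t ht
    obtain ⟨har1, -⟩ := har t ht
    have hvt := hv t ht
    have hwt := hw t ht
    have h0 := abs_coord_le_norm e 0
    have h1 := abs_coord_le_norm e 1
    have h2 := abs_coord_le_norm e 2
    have h3 := abs_coord_le_norm e 3
    have h4 := abs_coord_le_norm e 4
    have h0d : |e 0| ≤ d := h0.trans he
    have h1d : |e 1| ≤ d := h1.trans he
    have h2d : |e 2| ≤ d := h2.trans he
    have h13 : (0:ℝ) < 1 / k3 := by positivity
    simp only [gP]
    rw [norm_single5, abs_mul]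
    have hne : (0:ℝ) ≤ ‖e‖ := norm_nonneg e
    set ωc : ℝ := ωref t + vref t / 2 * (k2 * (e 1 + k3 * e 2) + 1 / k3 * Real.sin (e 2))
      with hωc
    set vc : ℝ := vref t * Real.cos (e 2) - k3 * e 2 * ωc + k1 * e 0 with hvcdef
    have hω : |ωc| ≤ Cω := by
      rw [hωc, hCωdef]
      have hX : |k2 * (e 1 + k3 * e 2) + 1 / k3 * Real.sin (e 2)| ≤ k2 * (1 + k3) * d + d / k3 := by
        have hs : |Real.sin (e 2)| ≤ d := (Real.abs_sin_le_abs).trans h2d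
        calc |k2 * (e 1 + k3 * e 2) + 1 / k3 * Real.sin (e 2)|
            ≤ |k2 * (e 1 + k3 * e 2)| + |1 / k3 * Real.sin (e 2)| := abs_add_le _ _
          _ = k2 * |e 1 + k3 * e 2| + 1 / k3 * |Real.sin (e 2)| := by
              rw [abs_mul, abs_mul, abs_of_pos hk2, abs_of_pos h13]
          _ ≤ k2 * (d + k3 * d) + 1 / k3 * d := by
              gcongr
              calc |e 1 + k3 * e 2| ≤ |e 1| + |k3 * e 2| := abs_add_le _ _
                _ = |e 1| + k3 * |e 2| := by rw [abs_mul, abs_of_pos hk3]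
                _ ≤ d + k3 * d := by gcongr
          _ = k2 * (1 + k3) * d + d / k3 := by ring
      calc |ωref t + vref t / 2 * (k2 * (e 1 + k3 * e 2) + 1 / k3 * Real.sin (e 2))|
          ≤ |ωref t| + |vref t| / 2 * |k2 * (e 1 + k3 * e 2) + 1 / k3 * Real.sin (e 2)| := by
            refine (abs_add_le _ _).trans ?_
            rw [abs_mul, abs_div, abs_two]
        _ ≤ M + M / 2 * (k2 * (1 + k3) * d + d / k3) := by
            have h1 : |vref t| / 2 * |k2 * (e 1 + k3 * e 2) + 1 / k3 * Real.sin (e 2)|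
                ≤ M / 2 * (k2 * (1 + k3) * d + d / k3) :=
              mul_le_mul (by linarith) hX (abs_nonneg _) (by positivity)
            linarith
    have hvc : |vc| ≤ Cv := by
      rw [hvcdef, hCvdef]
      calc |vref t * Real.cos (e 2) - k3 * e 2 * ωc + k1 * e 0|
          ≤ |vref t * Real.cos (e 2) - k3 * e 2 * ωc| + |k1 * e 0| := abs_add_le _ _
        _ ≤ |vref t * Real.cos (e 2)| + |k3 * e 2 * ωc| + |k1 * e 0| := by
            have := abs_sub (vref t * Real.cos (e 2)) (k3 * e 2 * ωc)
            linarith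
        _ = |vref t| * |Real.cos (e 2)| + k3 * |e 2| * |ωc| + k1 * |e 0| := by
            rw [abs_mul, abs_mul, abs_mul, abs_mul, abs_of_pos hk3, abs_of_pos hk1]
        _ ≤ M + k3 * d * Cω + k1 * d := by
            have h1 : |vref t| * |Real.cos (e 2)| ≤ M * 1 :=
              mul_le_mul hvt (Real.abs_cos_le_one _) (abs_nonneg _) hM.le
            have h2 : k3 * |e 2| * |ωc| ≤ k3 * d * Cω :=
              mul_le_mul (mul_le_mul_of_nonneg_left h2d hk3.le) hω (abs_nonneg _) (by positivity)
            have h3 : k1 * |e 0| ≤ k1 * d := mul_le_mul_of_nonneg_left h0d hk1.le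
            linarith
    have hΩ1 : |vc + b / 2 * ωc| ≤ CΩ := by
      rw [hCΩdef]
      calc |vc + b / 2 * ωc| ≤ |vc| + b / 2 * |ωc| := by
            refine (abs_add_le _ _).trans ?_
            rw [abs_mul, abs_of_pos (by positivity : (0:ℝ) < b / 2)]
        _ ≤ Cv + b / 2 * Cω := by gcongr
    have hΩ2 : |vc - b / 2 * ωc| ≤ CΩ := by
      rw [hCΩdef]
      calc |vc - b / 2 * ωc| ≤ |vc| + b / 2 * |ωc| := by
            refine (abs_sub _ _).trans ?_
            rw [abs_mul, abs_of_pos (by positivity : (0:ℝ) < b / 2)]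
        _ ≤ Cv + b / 2 * Cω := by gcongr
    have htl : |e 3 / al t| ≤ |e 3| := by
      rw [abs_div, abs_of_pos (by linarith : (0:ℝ) < al t)]
      exact div_le_self (abs_nonneg _) hal1
    have htr : |e 4 / ar t| ≤ |e 4| := by
      rw [abs_div, abs_of_pos (by linarith : (0:ℝ) < ar t)]
      exact div_le_self (abs_nonneg _) har1
    have hXfin : |1 / 2 * (e 3 / al t) * (vc - b / 2 * ωc) + 1 / 2 * (e 4 / ar t) * (vc + b / 2 * ωc)
        - k3 * e 2 * ωc + k1 * e 0| ≤ (CΩ + k3 * Cω + k1 + 1) * ‖e‖ := by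
      calc |1 / 2 * (e 3 / al t) * (vc - b / 2 * ωc) + 1 / 2 * (e 4 / ar t) * (vc + b / 2 * ωc)
            - k3 * e 2 * ωc + k1 * e 0|
          ≤ |1 / 2 * (e 3 / al t) * (vc - b / 2 * ωc) + 1 / 2 * (e 4 / ar t) * (vc + b / 2 * ωc)
            - k3 * e 2 * ωc| + |k1 * e 0| := abs_add_le _ _
        _ ≤ |1 / 2 * (e 3 / al t) * (vc - b / 2 * ωc) + 1 / 2 * (e 4 / ar t) * (vc + b / 2 * ωc)|
            + |k3 * e 2 * ωc| + |k1 * e 0| := by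
            have := abs_sub (1 / 2 * (e 3 / al t) * (vc - b / 2 * ωc)
              + 1 / 2 * (e 4 / ar t) * (vc + b / 2 * ωc)) (k3 * e 2 * ωc)
            linarith
        _ ≤ |1 / 2 * (e 3 / al t) * (vc - b / 2 * ωc)| + |1 / 2 * (e 4 / ar t) * (vc + b / 2 * ωc)|
            + |k3 * e 2 * ωc| + |k1 * e 0| := by
            have := abs_add_le (1 / 2 * (e 3 / al t) * (vc - b / 2 * ωc))
              (1 / 2 * (e 4 / ar t) * (vc + b / 2 * ωc))
            linarith
        _ = 1 / 2 * |e 3 / al t| * |vc - b / 2 * ωc| + 1 / 2 * |e 4 / ar t| * |vc + b / 2 * ωc|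
            + k3 * |e 2| * |ωc| + k1 * |e 0| := by
            simp only [abs_mul, abs_of_pos hk3, abs_of_pos hk1,
              abs_of_pos (show (0:ℝ) < 1/2 by norm_num)]
        _ ≤ 1 / 2 * ‖e‖ * CΩ + 1 / 2 * ‖e‖ * CΩ + k3 * ‖e‖ * Cω + k1 * ‖e‖ := by
            have ha : 1 / 2 * |e 3 / al t| * |vc - b / 2 * ωc| ≤ 1 / 2 * ‖e‖ * CΩ :=
              mul_le_mul (by nlinarith [htl.trans h3]) hΩ2 (abs_nonneg _) (by positivity)
            have hb2 : 1 / 2 * |e 4 / ar t| * |vc + b / 2 * ωc| ≤ 1 / 2 * ‖e‖ * CΩ :=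
              mul_le_mul (by nlinarith [htr.trans h4]) hΩ1 (abs_nonneg _) (by positivity)
            have hc : k3 * |e 2| * |ωc| ≤ k3 * ‖e‖ * Cω :=
              mul_le_mul (mul_le_mul_of_nonneg_left h2 hk3.le) hω (abs_nonneg _) (by positivity)
            have hd2 : k1 * |e 0| ≤ k1 * ‖e‖ := mul_le_mul_of_nonneg_left h0 hk1.le
            exact add_le_add (add_le_add (add_le_add ha hb2) hc) hd2
        _ = (CΩ + k3 * Cω + k1) * ‖e‖ := by ring
        _ ≤ (CΩ + k3 * Cω + k1 + 1) * ‖e‖ := by nlinarith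
    have hfin := mul_le_mul_of_nonneg_left hXfin (abs_nonneg (σ t))
    linarith
  · intro t
    have hz : ∀ i : Fin 5, (0 : EuclideanSpace ℝ (Fin 5)) i = 0 := fun _ => rfl
    rw [← norm_eq_zero]
    simp only [gP, hz]
    rw [norm_single5]
    simp
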